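/- arXiv:2310.06211 — 3 statements merged into one kernel-verified Lean document; each statement's English description precedes it below -/
import Mathlib

section
/- Let $G$ be a bounded linear positive semi-definite self-adjoint operator on a real Hilbert space $\mathcal{V}$, and define the semi-norm $\|u\|_G = \sqrt{\langle u, Gu\rangle}$. Let $\{u^k\}$ be a sequence in $\mathcal{V}$ and let $u^\dag, u^*$ be weak cluster points of $\{u^k\}$ such that both sequences $\{\|u^k - u^\dag\|_G^2\}$ and $\{\|u^k - u^*\|_G^2\}$ are monotonically decreasing. Then $\|u^* - u^\dag\|_G = 0$. -/
open RealInnerProductSpace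

theorem stmt_7 {V : Type*} [NormedAddCommGroup V] [InnerProductSpace ℝ V]
    [CompleteSpace V]
    (G : V →L[ℝ] V)
    (hGsa : ∀ u v : V, ⟪G u, v⟫ = ⟪u, G v⟫)
    (hGpsd : ∀ u : V, 0 ≤ ⟪u, G u⟫)
    (u : ℕ → V) (ud us : V)
    (φ ψ : ℕ → ℕ) (hφ : StrictMono φ) (hψ : StrictMono ψ)
    (hwd : ∀ w : V, Filter.Tendsto (fun j => ⟪u (φ j), w⟫) Filter.atTop (nhds ⟪ud, w⟫))
    (hws : ∀ w : V, Filter.Tendsto (fun j => ⟪u (ψ j), w⟫) Filter.atTop (nhds ⟪us, w⟫))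
    (hmd : Antitone (fun k => ⟪u k - ud, G (u k - ud)⟫))
    (hms : Antitone (fun k => ⟪u k - us, G (u k - us)⟫)) :
    Real.sqrt ⟪us - ud, G (us - ud)⟫ = 0 := by
  set a : ℕ → ℝ := fun k => ⟪u k - ud, G (u k - ud)⟫ with ha
  set b : ℕ → ℝ := fun k => ⟪u k - us, G (u k - us)⟫ with hb
  have hbA : BddBelow (Set.range a) := ⟨0, by rintro x ⟨k, rfl⟩; exact hGpsd _⟩
  have hbB : BddBelow (Set.range b) := ⟨0, by rintro x ⟨k, rfl⟩; exact hGpsd _⟩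
  have hA := tendsto_atTop_ciInf hmd hbA
  have hB := tendsto_atTop_ciInf hms hbB
  set w : V := G us - G ud with hw
  set c : ℝ := ⟪ud, G ud⟫ - ⟪us, G us⟫ with hc
  have key : ∀ k, a k - b k = 2 * ⟪u k, w⟫ + c := by
    intro k
    have h1 : ⟪ud, G (u k)⟫ = ⟪u k, G ud⟫ := by rw [← hGsa, real_inner_comm]
    have h2 : ⟪us, G (u k)⟫ = ⟪u k, G us⟫ := by rw [← hGsa, real_inner_comm]
    simp only [ha, hb, hw, hc, map_sub, inner_sub_left, inner_sub_right]
    rw [h1, h2]; ring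
  have hD : Filter.Tendsto (fun k => a k - b k) Filter.atTop
      (nhds ((⨅ i, a i) - ⨅ i, b i)) := hA.sub hB
  have limφ : Filter.Tendsto (fun j => a (φ j) - b (φ j)) Filter.atTop
      (nhds ((⨅ i, a i) - ⨅ i, b i)) := hD.comp hφ.tendsto_atTop
  have limψ : Filter.Tendsto (fun j => a (ψ j) - b (ψ j)) Filter.atTop
      (nhds ((⨅ i, a i) - ⨅ i, b i)) := hD.comp hψ.tendsto_atTop
  have limφ' : Filter.Tendsto (fun j => a (φ j) - b (φ j)) Filter.atTop
      (nhds (2 * ⟪ud, w⟫ + c)) := by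
    simp only [key]
    exact (((hwd w).const_mul 2).add tendsto_const_nhds)
  have limψ' : Filter.Tendsto (fun j => a (ψ j) - b (ψ j)) Filter.atTop
      (nhds (2 * ⟪us, w⟫ + c)) := by
    simp only [key]
    exact (((hws w).const_mul 2).add tendsto_const_nhds)
  have heq : 2 * ⟪ud, w⟫ + c = 2 * ⟪us, w⟫ + c :=
    (tendsto_nhds_unique limφ' limφ).trans (tendsto_nhds_unique limψ limψ')
  have hinner : ⟪us - ud, G (us - ud)⟫ = 0 := by
    have : ⟪us, w⟫ - ⟪ud, w⟫ = 0 := by linarith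
    rw [map_sub, ← hw, ← inner_sub_left] at *
    exact this
  rw [hinner, Real.sqrt_zero]
end

section
/- Let $\{E_k\}_{k\ge 1}$ be a monotonically decreasing sequence of nonnegative reals and $\{\Phi_k\}_{k\ge 0}$ a sequence of nonnegative reals such that $E_{k} \le \Phi_{k-1} - \Phi_{k} + \sqrt{2\rho_1 \Phi_{k}}\,\delta$ for all $k \ge 1$ and $\Phi_k^{1/2} \le \Phi_0^{1/2} + \sqrt{2\rho_1}\,k\,\delta$ for all $k \ge 0$, where $\rho_1 > 0$ and $\delta \ge 0$. Then $E_k \le \frac{2\Phi_0}{k} + \frac{5}{2}\rho_1 k \delta^2$ for all $k \ge 1$. -/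
theorem stmt_10 (E Φ : ℕ → ℝ) (δ ρ₁ : ℝ)
    (hE : ∀ k, 0 ≤ E k) (hΦ : ∀ k, 0 ≤ Φ k) (hδ : 0 ≤ δ) (hρ₁ : 0 < ρ₁)
    (hEmono : ∀ j k : ℕ, 1 ≤ j → j ≤ k → E k ≤ E j)
    (hrec : ∀ k : ℕ, 1 ≤ k → E k ≤ Φ (k - 1) - Φ k + Real.sqrt (2 * ρ₁ * Φ k) * δ)
    (hΦbd : ∀ k : ℕ, Real.sqrt (Φ k) ≤ Real.sqrt (Φ 0) + Real.sqrt (2 * ρ₁) * k * δ) :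
    ∀ k : ℕ, 1 ≤ k → E k ≤ 2 * Φ 0 / k + 5 / 2 * ρ₁ * k * δ ^ 2 := by
  intro k hk
  have hk0 : (0:ℝ) < k := by exact_mod_cast hk
  set s := Real.sqrt (2 * ρ₁ * Φ 0) with hs
  have hs0 : 0 ≤ s := Real.sqrt_nonneg _
  have hs2 : s * s = 2 * ρ₁ * Φ 0 := Real.mul_self_sqrt (by have := hΦ 0; positivity)
  -- per-term bound
  have hterm : ∀ j ∈ Finset.Icc 1 k,
      E j ≤ (Φ (j-1) - Φ j) + ((s + 2 * ρ₁ * j * δ) * δ) := by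
    intro j hj
    rw [Finset.mem_Icc] at hj
    have h1 := hrec j hj.1
    have h2 : Real.sqrt (2 * ρ₁ * Φ j) ≤ s + 2 * ρ₁ * j * δ := by
      have e1 : Real.sqrt (2 * ρ₁ * Φ j) = Real.sqrt (2 * ρ₁) * Real.sqrt (Φ j) := by
        rw [Real.sqrt_mul (by positivity)]
      have e2 : s = Real.sqrt (2 * ρ₁) * Real.sqrt (Φ 0) := by
        rw [hs, Real.sqrt_mul (by positivity)]
      have e3 : Real.sqrt (2 * ρ₁) * Real.sqrt (2 * ρ₁) = 2 * ρ₁ :=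
        Real.mul_self_sqrt (by positivity)
      calc Real.sqrt (2 * ρ₁ * Φ j) = Real.sqrt (2 * ρ₁) * Real.sqrt (Φ j) := e1
        _ ≤ Real.sqrt (2 * ρ₁) * (Real.sqrt (Φ 0) + Real.sqrt (2 * ρ₁) * j * δ) :=
            mul_le_mul_of_nonneg_left (hΦbd j) (Real.sqrt_nonneg _)
        _ = s + 2 * ρ₁ * j * δ := by rw [e2]; linear_combination ((j:ℝ) * δ) * e3
    nlinarith [mul_le_mul_of_nonneg_right h2 hδ]
  -- monotonicity: k * E k ≤ sum
  have hsum1 : (k:ℝ) * E k ≤ ∑ j ∈ Finset.Icc 1 k, E j := by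
    have h := Finset.sum_le_sum (fun j hj =>
      hEmono j k (Finset.mem_Icc.mp hj).1 (Finset.mem_Icc.mp hj).2)
    simpa [Nat.card_Icc, mul_comm] using h
  -- telescoping
  have htel : ∀ n : ℕ, ∑ j ∈ Finset.Icc 1 n, (Φ (j-1) - Φ j) = Φ 0 - Φ n := by
    intro n
    induction n with
    | zero => simp
    | succ n ih =>
      rw [Finset.sum_Icc_succ_top (by omega), ih]
      simp
  -- gauss
  have hgauss : ∀ n : ℕ, ∑ j ∈ Finset.Icc 1 n, (j:ℝ) = n * (n+1) / 2 := by
    intro n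
    induction n with
    | zero => simp
    | succ n ih =>
      rw [Finset.sum_Icc_succ_top (by omega), ih]
      push_cast
      ring
  -- sum bound
  have hsum2 : ∑ j ∈ Finset.Icc 1 k, E j ≤
      (Φ 0 - Φ k) + (s * k + 2 * ρ₁ * (k * (k+1) / 2) * δ) * δ := by
    calc ∑ j ∈ Finset.Icc 1 k, E j
        ≤ ∑ j ∈ Finset.Icc 1 k, ((Φ (j-1) - Φ j) + ((s + 2 * ρ₁ * j * δ) * δ)) :=
          Finset.sum_le_sum hterm
      _ = (Φ 0 - Φ k) + (s * k + 2 * ρ₁ * (k * (k+1) / 2) * δ) * δ := by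
          rw [Finset.sum_add_distrib, htel]
          congr 1
          have h0 : ∑ j ∈ Finset.Icc 1 k, ((s + 2 * ρ₁ * j * δ) * δ)
              = ∑ j ∈ Finset.Icc 1 k, (s * δ + 2 * ρ₁ * δ * δ * (j:ℝ)) :=
            Finset.sum_congr rfl (fun j _ => by ring)
          rw [h0, Finset.sum_add_distrib, Finset.sum_const, ← Finset.mul_sum, hgauss,
            Nat.card_Icc, Nat.add_sub_cancel, nsmul_eq_mul]
          ring
  -- key: s * k * δ ≤ Φ 0 + ρ₁ * k^2 * δ^2 / 2
  have hamgm : s * k * δ ≤ Φ 0 + ρ₁ * k^2 * δ^2 / 2 := by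
    nlinarith [sq_nonneg (s - ρ₁ * k * δ), mul_pos hρ₁ hρ₁, sq_nonneg ((k:ℝ) * δ)]
  have hkey : (k:ℝ) * E k ≤ 2 * Φ 0 + 5/2 * ρ₁ * k^2 * δ^2 := by
    have hΦk := hΦ k
    have h1k : (1:ℝ) ≤ k := by exact_mod_cast hk
    nlinarith [hsum1, hsum2, hamgm, hk0,
      mul_nonneg (mul_nonneg (mul_nonneg hρ₁.le hδ) hδ)
        (mul_nonneg hk0.le (by linarith : (0:ℝ) ≤ (k:ℝ) - 1))]
  have : E k ≤ (2 * Φ 0 + 5/2 * ρ₁ * k^2 * δ^2) / k := by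
    rw [le_div_iff₀ hk0]; linarith [hkey]
  calc E k ≤ (2 * Φ 0 + 5/2 * ρ₁ * k^2 * δ^2) / k := this
    _ = 2 * Φ 0 / k + 5 / 2 * ρ₁ * k * δ ^ 2 := by
        field_simp
end

section
/- Let $\{s_k\}_{k \ge 1}$ be a monotonically decreasing sequence of nonnegative reals and $\{a_k\}_{k \ge 0}$ a nonnegative sequence with $a_k \le C(k+1)^{-\beta}$ for some $C > 0$, $\beta > 0$, such that $\sum_{j=l}^{k} s_j \le a_l$ for all integers $1 \le l < k$. Then there is a constant $\tilde C > 0$ such that $s_k \le \tilde C (k+1)^{-\beta - 1}$ for all $k \ge 1$. -/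
/-!
Take `l = ⌈k/2⌉`. Every term of `∑_{j=l}^{k+1} s_j` up to `j = k` is at least `s_k`, and there
are at least `(k+1)/2` of them, so `(k+1)/2 · s_k ≤ a_l ≤ C (l+1)^{-β} ≤ C ((k+1)/2)^{-β}`.
Dividing by `(k+1)/2` gives `s_k ≤ 2^{β+1} C (k+1)^{-β-1}`. Running the sum to `k+1` rather than
`k` keeps `l < k+1` also for `k = 1`, so no case split is needed.
-/

open Finset Real

lemma card_mul_le_sum_Icc {s : ℕ → ℝ}
    (hsmono : ∀ j k : ℕ, 1 ≤ j → j ≤ k → s k ≤ s j) {l : ℕ} (hl : 1 ≤ l) (k : ℕ) :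
    ((k + 1 - l : ℕ) : ℝ) * s k ≤ ∑ j ∈ Icc l k, s j := by
  have h := card_nsmul_le_sum (Icc l k) s (s k) fun j hj =>
    hsmono j k (hl.trans (mem_Icc.1 hj).1) (mem_Icc.1 hj).2
  rwa [Nat.card_Icc, nsmul_eq_mul] at h

lemma le_mul_rpow_sub_one {x t C β : ℝ} (hx : 0 < x) (h : x * t ≤ C * x ^ (-β)) :
    t ≤ C * x ^ (-β - 1) := by
  rw [rpow_sub_one hx.ne', ← mul_div_assoc, le_div_iff₀ hx, mul_comm]
  exact h

lemma half_rpow_neg_sub_one {x : ℝ} (hx : 0 ≤ x) (β : ℝ) :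
    (x / 2) ^ (-β - 1) = 2 ^ (β + 1) * x ^ (-β - 1) := by
  rw [div_rpow hx zero_le_two, show -β - 1 = -(β + 1) by ring, rpow_neg zero_le_two]
  field_simp

lemma half_succ_le_sub_half_succ (k : ℕ) :
    ((k : ℝ) + 1) / 2 ≤ ((k + 1 - (k + 1) / 2 : ℕ) : ℝ) := by
  have h : k + 1 ≤ 2 * (k + 1 - (k + 1) / 2) := by omega
  rw [div_le_iff₀ two_pos, mul_comm]
  exact_mod_cast h

lemma half_succ_le_half_succ_add_one (k : ℕ) :
    ((k : ℝ) + 1) / 2 ≤ (((k + 1) / 2 : ℕ) : ℝ) + 1 := by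
  have h : k + 1 ≤ 2 * ((k + 1) / 2 + 1) := by omega
  rw [div_le_iff₀ two_pos, mul_comm]
  exact_mod_cast h

theorem stmt_18_general (s a : ℕ → ℝ) (C β : ℝ)
    (hs : ∀ k, 0 ≤ s k) (hsmono : ∀ j k : ℕ, 1 ≤ j → j ≤ k → s k ≤ s j)
    (hC : 0 < C) (hβ : 0 < β)
    (habd : ∀ k : ℕ, a k ≤ C * ((k : ℝ) + 1) ^ (-β))
    (hsum : ∀ l k : ℕ, 1 ≤ l → l < k → ∑ j ∈ Finset.Icc l k, s j ≤ a l) :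
    ∃ C' : ℝ, 0 < C' ∧ ∀ k : ℕ, 1 ≤ k → s k ≤ C' * ((k : ℝ) + 1) ^ (-β - 1) := by
  refine ⟨2 ^ (β + 1) * C, by positivity, fun k hk => ?_⟩
  set l := (k + 1) / 2
  have hl : 1 ≤ l := by omega
  have hx : (0 : ℝ) < ((k : ℝ) + 1) / 2 := by positivity
  have hmain : ((k : ℝ) + 1) / 2 * s k ≤ C * (((k : ℝ) + 1) / 2) ^ (-β) :=
    calc ((k : ℝ) + 1) / 2 * s k
        ≤ ((k + 1 - l : ℕ) : ℝ) * s k :=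
          mul_le_mul_of_nonneg_right (half_succ_le_sub_half_succ k) (hs k)
      _ ≤ ∑ j ∈ Icc l k, s j := card_mul_le_sum_Icc hsmono hl k
      _ ≤ ∑ j ∈ Icc l (k + 1), s j :=
          sum_le_sum_of_subset_of_nonneg (Icc_subset_Icc_right k.le_succ) fun j _ _ => hs j
      _ ≤ a l := hsum l (k + 1) hl (by omega)
      _ ≤ C * ((l : ℝ) + 1) ^ (-β) := habd l
      _ ≤ C * (((k : ℝ) + 1) / 2) ^ (-β) := mul_le_mul_of_nonneg_left
          (rpow_le_rpow_of_nonpos hx (half_succ_le_half_succ_add_one k) (neg_nonpos.2 hβ.le)) hC.le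
  calc s k ≤ C * (((k : ℝ) + 1) / 2) ^ (-β - 1) := le_mul_rpow_sub_one hx hmain
    _ = 2 ^ (β + 1) * C * ((k : ℝ) + 1) ^ (-β - 1) := by
      rw [half_rpow_neg_sub_one (by positivity)]; ring

theorem stmt_18 (s a : ℕ → ℝ) (C β : ℝ)
    (hs : ∀ k, 0 ≤ s k) (hsmono : ∀ j k : ℕ, 1 ≤ j → j ≤ k → s k ≤ s j)
    (ha : ∀ k, 0 ≤ a k) (hC : 0 < C) (hβ : 0 < β)
    (habd : ∀ k : ℕ, a k ≤ C * ((k : ℝ) + 1) ^ (-β))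
    (hsum : ∀ l k : ℕ, 1 ≤ l → l < k → ∑ j ∈ Finset.Icc l k, s j ≤ a l) :
    ∃ C' : ℝ, 0 < C' ∧ ∀ k : ℕ, 1 ≤ k → s k ≤ C' * ((k : ℝ) + 1) ^ (-β - 1) :=
  stmt_18_general s a C β hs hsmono hC hβ habd hsum
end
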